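/- arXiv:2512.18861 — 5 statements merged into one kernel-verified Lean document; each statement's English description precedes it below -/
import Mathlib

section
/- The number of non-planar full binary rooted trees with n labelled leaves (n ≥ 1) equals the odd double factorial (2n-3)!!. -/
/-- Planar full binary rooted trees with leaves labelled by elements of `Fin n`. -/
inductive PTree (n : ℕ) : Type where
  | leaf : Fin n → PTree n
  | node : PTree n → PTree n → PTree n

namespace PTree

/-- The list of leaf labels of a planar tree (left-to-right). -/
def leaves {n : ℕ} : PTree n → List (Fin n)
  | .leaf i => [i]
  | .node a b => leaves a ++ leaves b

/-- The tree is labelled bijectively by the `n` labels: each label occurs exactly once. -/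
def Labelled {n : ℕ} (t : PTree n) : Prop :=
  (leaves t).Nodup ∧ ∀ i : Fin n, i ∈ leaves t

/-- Equivalence of planar trees up to swapping the two children at any internal
vertex; its classes are the non-planar full binary rooted trees. -/
inductive TEquiv {n : ℕ} : PTree n → PTree n → Prop
  | leaf (i : Fin n) : TEquiv (.leaf i) (.leaf i)
  | node {a b a' b' : PTree n} : TEquiv a a' → TEquiv b b' →
      TEquiv (.node a b) (.node a' b')
  | swap {a b a' b' : PTree n} : TEquiv a a' → TEquiv b b' →
      TEquiv (.node a b) (.node b' a')

end PTree

namespace PTree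

section Basic
variable {n : ℕ}

theorem TEquiv.refl : ∀ t : PTree n, TEquiv t t
  | .leaf i => .leaf i
  | .node a b => .node (TEquiv.refl a) (TEquiv.refl b)

theorem TEquiv.symm {t u : PTree n} (h : TEquiv t u) : TEquiv u t := by
  induction h with
  | leaf i => exact .leaf i
  | node _ _ iha ihb => exact .node iha ihb
  | swap _ _ iha ihb => exact .swap ihb iha

theorem TEquiv.trans {t u w : PTree n} (h1 : TEquiv t u) (h2 : TEquiv u w) :
    TEquiv t w := by
  induction h1 generalizing w with
  | leaf i => exact h2
  | node _ _ iha ihb =>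
    cases h2 with
    | node h2a h2b => exact .node (iha h2a) (ihb h2b)
    | swap h2a h2b => exact .swap (iha h2a) (ihb h2b)
  | swap _ _ iha ihb =>
    cases h2 with
    | node h2a h2b => exact .swap (iha h2b) (ihb h2a)
    | swap h2a h2b => exact .node (iha h2b) (ihb h2a)

theorem TEquiv.perm {t u : PTree n} (h : TEquiv t u) : (leaves t).Perm (leaves u) := by
  induction h with
  | leaf i => exact List.Perm.refl _
  | node _ _ iha ihb => exact iha.append ihb
  | swap _ _ iha ihb =>
    exact (iha.append ihb).trans (List.perm_append_comm)

theorem leaves_ne_nil (t : PTree n) : leaves t ≠ [] := by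
  induction t with
  | leaf i => simp [leaves]
  | node a b iha ihb => simp [leaves, iha]

def leafFinset (t : PTree n) : Finset (Fin n) := (leaves t).toFinset

theorem mem_leafFinset {i : Fin n} {t : PTree n} : i ∈ leafFinset t ↔ i ∈ leaves t := by
  simp [leafFinset]

theorem leafFinset_node (a b : PTree n) :
    leafFinset (.node a b) = leafFinset a ∪ leafFinset b := by
  simp [leafFinset, leaves]

theorem leafFinset_nonempty (t : PTree n) : (leafFinset t).Nonempty := by
  obtain ⟨x, hx⟩ := List.exists_mem_of_ne_nil _ (leaves_ne_nil t)
  exact ⟨x, mem_leafFinset.2 hx⟩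

theorem TEquiv.leafFinset_eq {t u : PTree n} (h : TEquiv t u) :
    leafFinset t = leafFinset u := by
  simp [leafFinset, List.toFinset_eq_iff_perm_dedup]
  exact (h.perm.dedup)

def clades : PTree n → Finset (Finset (Fin n))
  | .leaf i => {{i}}
  | .node a b => insert (leafFinset (.node a b)) (clades a ∪ clades b)

theorem leafFinset_mem_clades (t : PTree n) : leafFinset t ∈ clades t := by
  cases t with
  | leaf i => simp [clades, leafFinset, leaves]
  | node a b => simp [clades]

theorem clades_subset {S : Finset (Fin n)} {t : PTree n} (h : S ∈ clades t) :
    S ⊆ leafFinset t := by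
  induction t with
  | leaf i =>
    simp [clades] at h
    subst h
    simp [leafFinset, leaves]
  | node a b iha ihb =>
    simp only [clades, Finset.mem_insert, Finset.mem_union] at h
    rcases h with h | h | h
    · exact h.le
    · exact (iha h).trans (by rw [leafFinset_node]; exact Finset.subset_union_left)
    · exact (ihb h).trans (by rw [leafFinset_node]; exact Finset.subset_union_right)

theorem clades_nonempty {S : Finset (Fin n)} {t : PTree n} (h : S ∈ clades t) :
    S.Nonempty := by
  induction t with
  | leaf i => simp [clades] at h; subst h; simp
  | node a b iha ihb =>
    simp only [clades, Finset.mem_insert, Finset.mem_union] at h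
    rcases h with h | h | h
    · rw [h]; exact leafFinset_nonempty _
    · exact iha h
    · exact ihb h

theorem TEquiv.clades_eq {t u : PTree n} (h : TEquiv t u) : clades t = clades u := by
  induction h with
  | leaf i => rfl
  | node h1 h2 iha ihb =>
    simp only [clades, iha, ihb]
    rw [(TEquiv.node h1 h2).leafFinset_eq]
  | swap h1 h2 iha ihb =>
    simp only [clades, iha, ihb]
    rw [(TEquiv.swap h1 h2).leafFinset_eq, Finset.union_comm]

theorem clades_card {t : PTree n} (h : (leaves t).Nodup) :
    (clades t).card = 2 * (leaves t).length - 1 := by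
  induction t with
  | leaf i => simp [clades, leaves]
  | node a b iha ihb =>
    have hl : leaves (PTree.node a b) = leaves a ++ leaves b := rfl
    rw [hl, List.nodup_append] at h
    obtain ⟨ha, hb, hdisj⟩ := h
    have hdisjF : Disjoint (leafFinset a) (leafFinset b) := by
      rw [Finset.disjoint_left]
      intro x hx hx'
      exact hdisj _ (mem_leafFinset.1 hx) _ (mem_leafFinset.1 hx') rfl
    -- clades a and clades b are disjoint
    have hcd : Disjoint (clades a) (clades b) := by
      rw [Finset.disjoint_left]
      intro S hS hS'
      obtain ⟨x, hx⟩ := clades_nonempty hS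
      exact (Finset.disjoint_left.1 hdisjF) (clades_subset hS hx) (clades_subset hS' hx)
    have hnotin : leafFinset (PTree.node a b) ∉ clades a ∪ clades b := by
      intro hmem
      rw [Finset.mem_union] at hmem
      rcases hmem with hm | hm
      · obtain ⟨x, hx⟩ := leafFinset_nonempty b
        have : x ∈ leafFinset (PTree.node a b) := by
          rw [leafFinset_node]; exact Finset.mem_union_right _ hx
        have := clades_subset hm this
        exact (Finset.disjoint_left.1 hdisjF) this hx
      · obtain ⟨x, hx⟩ := leafFinset_nonempty a
        have : x ∈ leafFinset (PTree.node a b) := by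
          rw [leafFinset_node]; exact Finset.mem_union_left _ hx
        have := clades_subset hm this
        exact (Finset.disjoint_left.1 hdisjF) hx this
    have hla : 1 ≤ (leaves a).length := List.length_pos_iff.2 (leaves_ne_nil a)
    have hlb : 1 ≤ (leaves b).length := List.length_pos_iff.2 (leaves_ne_nil b)
    rw [clades, Finset.card_insert_of_notMem hnotin, Finset.card_union_of_disjoint hcd,
      iha ha, ihb hb, hl, List.length_append]
    omega

end Basic

section Map
variable {m k : ℕ}

def pmap (f : Fin m → Fin k) : PTree m → PTree k
  | .leaf i => .leaf (f i)
  | .node a b => .node (pmap f a) (pmap f b)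

theorem leaves_pmap (f : Fin m → Fin k) (t : PTree m) :
    leaves (pmap f t) = (leaves t).map f := by
  induction t with
  | leaf i => rfl
  | node a b iha ihb => simp [pmap, leaves, iha, ihb]

theorem leafFinset_pmap (f : Fin m → Fin k) (t : PTree m) :
    leafFinset (pmap f t) = (leafFinset t).image f := by
  ext x; simp [mem_leafFinset, leaves_pmap, Finset.mem_image, mem_leafFinset]

theorem clades_pmap (f : Fin m → Fin k) (t : PTree m) :
    clades (pmap f t) = (clades t).image (Finset.image f) := by
  induction t with
  | leaf i => simp [pmap, clades, Finset.image_singleton]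
  | node a b iha ihb =>
    have : pmap f (PTree.node a b) = PTree.node (pmap f a) (pmap f b) := rfl
    rw [this, clades, clades, iha, ihb, Finset.image_insert, Finset.image_union]
    congr 1
    rw [← this, leafFinset_pmap]

theorem pmap_pmap {l : ℕ} (f : Fin k → Fin l) (g : Fin m → Fin k) (t : PTree m) :
    pmap f (pmap g t) = pmap (f ∘ g) t := by
  induction t with
  | leaf i => rfl
  | node a b iha ihb => simp [pmap, iha, ihb]

theorem pmap_congr {f g : Fin m → Fin k} {t : PTree m}
    (h : ∀ i ∈ leaves t, f i = g i) : pmap f t = pmap g t := by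
  induction t with
  | leaf i => simp [pmap, h i (by simp [leaves])]
  | node a b iha ihb =>
    have hl : ∀ i ∈ leaves a, f i = g i := fun i hi => h i (by simp [leaves, hi])
    have hr : ∀ i ∈ leaves b, f i = g i := fun i hi => h i (by simp [leaves, hi])
    simp [pmap, iha hl, ihb hr]

theorem pmap_eq_id {f : Fin m → Fin m} {t : PTree m}
    (h : ∀ i ∈ leaves t, f i = i) : pmap f t = t := by
  induction t with
  | leaf i => simp [pmap, h i (by simp [leaves])]
  | node a b iha ihb =>
    have hl : ∀ i ∈ leaves a, f i = i := fun i hi => h i (by simp [leaves, hi])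
    have hr : ∀ i ∈ leaves b, f i = i := fun i hi => h i (by simp [leaves, hi])
    simp [pmap, iha hl, ihb hr]

theorem image_eq_id {α : Type*} [DecidableEq α] {f : α → α} {s : Finset α}
    (h : ∀ x ∈ s, f x = x) : s.image f = s := by
  ext x
  simp only [Finset.mem_image]
  constructor
  · rintro ⟨y, hy, rfl⟩
    rwa [h y hy]
  · intro hx
    exact ⟨x, hx, h x hx⟩

theorem pmap_id (t : PTree m) : pmap id t = t := by
  induction t with
  | leaf i => rfl
  | node a b iha ihb => simp [pmap, iha, ihb]

theorem TEquiv.pmap {f : Fin m → Fin k} {t u : PTree m} (h : TEquiv t u) :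
    TEquiv (pmap f t) (pmap f u) := by
  induction h with
  | leaf i => exact .leaf _
  | node _ _ iha ihb => exact .node iha ihb
  | swap _ _ iha ihb => exact .swap iha ihb

end Map

section Top
variable {n : ℕ}

theorem leaves_eq_singleton {t : PTree n} {x : Fin n} : leaves t = [x] ↔ t = .leaf x := by
  constructor
  · intro h
    cases t with
    | leaf i =>
      have : i = x := by simpa [leaves] using h
      rw [this]
    | node a b =>
      exfalso
      have := congrArg List.length h
      simp only [leaves, List.length_append, List.length_singleton] at this
      have ha := List.length_pos_iff.2 (leaves_ne_nil a)
      have hb := List.length_pos_iff.2 (leaves_ne_nil b)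
      omega
  · rintro rfl; rfl

theorem leaves_node_ne_singleton {a b : PTree n} {x : Fin n} :
    leaves (.node a b) ≠ [x] := by
  intro h
  rw [leaves_eq_singleton] at h
  cases h

theorem nodup_node {a b : PTree n} (h : (leaves (PTree.node a b)).Nodup) :
    (leaves a).Nodup ∧ (leaves b).Nodup ∧ (leaves a).Disjoint (leaves b) := by
  have : leaves (PTree.node a b) = leaves a ++ leaves b := rfl
  rw [this, List.nodup_append] at h
  exact ⟨h.1, h.2.1, fun x hx hy => h.2.2 x hx x hy rfl⟩

/-- Insert a new leaf labelled `Fin.last n` as sibling of the (first) subtree whose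
leaf set is `S`. -/
def insAt (S : Finset (Fin (n+1))) : PTree (n+1) → PTree (n+1)
  | .leaf i => if leafFinset (.leaf i : PTree (n+1)) = S then
      .node (.leaf i) (.leaf (Fin.last n)) else .leaf i
  | .node a b => if leafFinset (.node a b) = S then
      .node (.node a b) (.leaf (Fin.last n)) else .node (insAt S a) (insAt S b)

/-- Delete the leaf labelled `Fin.last n`. -/
def del : PTree (n+1) → PTree (n+1)
  | .leaf i => .leaf i
  | .node a b => if leaves a = [Fin.last n] then b
      else if leaves b = [Fin.last n] then a
      else .node (del a) (del b)

/-- Leaf set of the sibling subtree of the leaf labelled `Fin.last n`. -/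
def sib : PTree (n+1) → Finset (Fin (n+1))
  | .leaf _ => ∅
  | .node a b => if leaves a = [Fin.last n] then leafFinset b
      else if leaves b = [Fin.last n] then leafFinset a
      else if Fin.last n ∈ leaves a then sib a else sib b

theorem insAt_self (S : Finset (Fin (n+1))) (t : PTree (n+1)) (h : leafFinset t = S) :
    insAt S t = .node t (.leaf (Fin.last n)) := by
  cases t <;> simp [insAt, h]

theorem insAt_of_not_mem {S : Finset (Fin (n+1))} {t : PTree (n+1)}
    (h : S ∉ clades t) : insAt S t = t := by
  induction t with
  | leaf i =>
    have : leafFinset (.leaf i : PTree (n+1)) ≠ S := by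
      intro hc; exact h (hc ▸ leafFinset_mem_clades _)
    simp [insAt, this]
  | node a b iha ihb =>
    have h0 : leafFinset (.node a b : PTree (n+1)) ≠ S := by
      intro hc; exact h (hc ▸ leafFinset_mem_clades _)
    have ha : S ∉ clades a := fun hc => h (by simp [clades, hc])
    have hb : S ∉ clades b := fun hc => h (by simp [clades, hc])
    simp [insAt, h0, iha ha, ihb hb]

theorem del_of_not_mem {t : PTree (n+1)} (h : Fin.last n ∉ leaves t) : del t = t := by
  induction t with
  | leaf i => rfl
  | node a b iha ihb =>
    have hm : leaves (PTree.node a b) = leaves a ++ leaves b := rfl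
    rw [hm, List.mem_append] at h
    push_neg at h
    have ha : leaves a ≠ [Fin.last n] := fun hc => h.1 (by rw [hc]; simp)
    have hb : leaves b ≠ [Fin.last n] := fun hc => h.2 (by rw [hc]; simp)
    simp [del, ha, hb, iha h.1, ihb h.2]

theorem sib_of_not_mem {t : PTree (n+1)} (h : Fin.last n ∉ leaves t) : sib t = ∅ := by
  induction t with
  | leaf i => rfl
  | node a b iha ihb =>
    have hm : leaves (PTree.node a b) = leaves a ++ leaves b := rfl
    rw [hm, List.mem_append] at h
    push_neg at h
    have ha : leaves a ≠ [Fin.last n] := fun hc => h.1 (by rw [hc]; simp)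
    have hb : leaves b ≠ [Fin.last n] := fun hc => h.2 (by rw [hc]; simp)
    simp [sib, ha, hb, h.1, ihb h.2]

theorem sib_subset (t : PTree (n+1)) : sib t ⊆ leafFinset t := by
  induction t with
  | leaf i => simp [sib]
  | node a b iha ihb =>
    rw [sib]
    split
    · rw [leafFinset_node]; exact Finset.subset_union_right
    · split
      · rw [leafFinset_node]; exact Finset.subset_union_left
      · split
        · exact iha.trans (by rw [leafFinset_node]; exact Finset.subset_union_left)
        · exact ihb.trans (by rw [leafFinset_node]; exact Finset.subset_union_right)


theorem clades_disjoint {a b : PTree n} (h : (leaves (PTree.node a b)).Nodup)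
    {S : Finset (Fin n)} (hSa : S ∈ clades a) : S ∉ clades b := by
  intro hSb
  obtain ⟨x, hx⟩ := clades_nonempty hSa
  obtain ⟨hna, hnb, hd⟩ := nodup_node h
  exact hd (mem_leafFinset.1 (clades_subset hSa hx))
    (mem_leafFinset.1 (clades_subset hSb hx))

theorem mem_clades_cases {a b : PTree n} {S : Finset (Fin n)}
    (h : S ∈ clades (.node a b)) (hroot : leafFinset (.node a b) ≠ S) :
    S ∈ clades a ∨ S ∈ clades b := by
  simp only [clades, Finset.mem_insert, Finset.mem_union] at h
  rcases h with h | h | h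
  · exact absurd h.symm hroot
  · exact Or.inl h
  · exact Or.inr h

theorem leaves_insAt_perm {S : Finset (Fin (n+1))} {t : PTree (n+1)}
    (hn : (leaves t).Nodup) (hS : S ∈ clades t) :
    (leaves (insAt S t)).Perm (Fin.last n :: leaves t) := by
  induction t with
  | leaf i =>
    have hSe : S = {i} := by simpa [clades] using hS
    have : leafFinset (.leaf i : PTree (n+1)) = S := by simp [leafFinset, leaves, hSe]
    rw [insAt_self _ _ this]
    simp only [leaves]
    exact List.Perm.swap _ _ _
  | node a b iha ihb =>
    by_cases hroot : leafFinset (.node a b : PTree (n+1)) = S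
    · rw [insAt_self _ _ hroot]
      show ((leaves (PTree.node a b)) ++ [Fin.last n]).Perm _
      exact List.perm_append_singleton _ _
    · obtain ⟨hna, hnb, hd⟩ := nodup_node hn
      have heq : insAt S (.node a b) = .node (insAt S a) (insAt S b) := by
        rw [insAt, if_neg hroot]
      rcases mem_clades_cases hS hroot with hSa | hSb
      · have hnb' : insAt S b = b := insAt_of_not_mem (clades_disjoint hn hSa)
        rw [heq, hnb']
        show (leaves (insAt S a) ++ leaves b).Perm (Fin.last n :: (leaves a ++ leaves b))
        exact ((iha hna hSa).append_right _)
      · have hSa' : S ∉ clades a := fun hc => (clades_disjoint hn hc) hSb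
        rw [heq, insAt_of_not_mem hSa']
        show (leaves a ++ leaves (insAt S b)).Perm (Fin.last n :: (leaves a ++ leaves b))
        exact ((ihb hnb hSb).append_left _).trans List.perm_middle

theorem leaves_insAt_ne_singleton {S : Finset (Fin (n+1))} {t : PTree (n+1)}
    (hn : (leaves t).Nodup) (hS : S ∈ clades t) {x : Fin (n+1)} :
    leaves (insAt S t) ≠ [x] := by
  intro hc
  have h2 := (leaves_insAt_perm hn hS).length_eq
  rw [hc] at h2
  have h3 : (1:ℕ) = (leaves t).length + 1 := by simpa using h2
  exact leaves_ne_nil t (List.length_eq_zero_iff.1 (by omega))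

theorem del_insAt {S : Finset (Fin (n+1))} {t : PTree (n+1)}
    (hn : (leaves t).Nodup) (ht : Fin.last n ∉ leaves t) (hS : S ∈ clades t) :
    del (insAt S t) = t := by
  induction t with
  | leaf i =>
    have hSe : S = {i} := by simpa [clades] using hS
    have h1 : leafFinset (.leaf i : PTree (n+1)) = S := by simp [leafFinset, leaves, hSe]
    rw [insAt_self _ _ h1]
    have hi : i ≠ Fin.last n := by
      intro hc; exact ht (by simp [leaves, hc])
    have : leaves (.leaf i : PTree (n+1)) ≠ [Fin.last n] := by
      simp [leaves, hi]
    have hl : leaves (.leaf (Fin.last n) : PTree (n+1)) = [Fin.last n] := rfl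
    rw [del, if_neg this, if_pos hl]
  | node a b iha ihb =>
    obtain ⟨hna, hnb, hd⟩ := nodup_node hn
    have hta : Fin.last n ∉ leaves a := fun hc => ht (by
      show _ ∈ leaves a ++ leaves b; exact List.mem_append_left _ hc)
    have htb : Fin.last n ∉ leaves b := fun hc => ht (by
      show _ ∈ leaves a ++ leaves b; exact List.mem_append_right _ hc)
    by_cases hroot : leafFinset (.node a b : PTree (n+1)) = S
    · have hl : leaves (.leaf (Fin.last n) : PTree (n+1)) = [Fin.last n] := rfl
      rw [insAt_self _ _ hroot, del, if_neg leaves_node_ne_singleton, if_pos hl]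
    · have heq : insAt S (.node a b) = .node (insAt S a) (insAt S b) := by
        rw [insAt, if_neg hroot]
      have hbs : leaves b ≠ [Fin.last n] := fun hc => htb (by rw [hc]; simp)
      have has : leaves a ≠ [Fin.last n] := fun hc => hta (by rw [hc]; simp)
      rcases mem_clades_cases hS hroot with hSa | hSb
      · rw [heq, insAt_of_not_mem (clades_disjoint hn hSa), del,
          if_neg (leaves_insAt_ne_singleton hna hSa), if_neg hbs,
          iha hna hta hSa, del_of_not_mem htb]
      · have hSa' : S ∉ clades a := fun hc => (clades_disjoint hn hc) hSb
        rw [heq, insAt_of_not_mem hSa', del, if_neg has,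
          if_neg (leaves_insAt_ne_singleton hnb hSb),
          ihb hnb htb hSb, del_of_not_mem hta]

theorem sib_insAt {S : Finset (Fin (n+1))} {t : PTree (n+1)}
    (hn : (leaves t).Nodup) (ht : Fin.last n ∉ leaves t) (hS : S ∈ clades t) :
    sib (insAt S t) = S := by
  induction t with
  | leaf i =>
    have hSe : S = {i} := by simpa [clades] using hS
    have h1 : leafFinset (.leaf i : PTree (n+1)) = S := by simp [leafFinset, leaves, hSe]
    rw [insAt_self _ _ h1]
    have hi : i ≠ Fin.last n := by
      intro hc; exact ht (by simp [leaves, hc])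
    have h2 : leaves (.leaf i : PTree (n+1)) ≠ [Fin.last n] := by simp [leaves, hi]
    have hl : leaves (.leaf (Fin.last n) : PTree (n+1)) = [Fin.last n] := rfl
    rw [sib, if_neg h2, if_pos hl, h1]
  | node a b iha ihb =>
    obtain ⟨hna, hnb, hd⟩ := nodup_node hn
    have hta : Fin.last n ∉ leaves a := fun hc => ht (by
      show _ ∈ leaves a ++ leaves b; exact List.mem_append_left _ hc)
    have htb : Fin.last n ∉ leaves b := fun hc => ht (by
      show _ ∈ leaves a ++ leaves b; exact List.mem_append_right _ hc)
    by_cases hroot : leafFinset (.node a b : PTree (n+1)) = S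
    · have hl : leaves (.leaf (Fin.last n) : PTree (n+1)) = [Fin.last n] := rfl
      rw [insAt_self _ _ hroot, sib, if_neg leaves_node_ne_singleton, if_pos hl, hroot]
    · have heq : insAt S (.node a b) = .node (insAt S a) (insAt S b) := by
        rw [insAt, if_neg hroot]
      have hbs : leaves b ≠ [Fin.last n] := fun hc => htb (by rw [hc]; simp)
      have has : leaves a ≠ [Fin.last n] := fun hc => hta (by rw [hc]; simp)
      rcases mem_clades_cases hS hroot with hSa | hSb
      · have hmem : Fin.last n ∈ leaves (insAt S a) :=
          (leaves_insAt_perm hna hSa).mem_iff.2 List.mem_cons_self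
        rw [heq, insAt_of_not_mem (clades_disjoint hn hSa), sib,
          if_neg (leaves_insAt_ne_singleton hna hSa), if_neg hbs, if_pos hmem,
          iha hna hta hSa]
      · have hSa' : S ∉ clades a := fun hc => (clades_disjoint hn hc) hSb
        rw [heq, insAt_of_not_mem hSa', sib, if_neg has,
          if_neg (leaves_insAt_ne_singleton hnb hSb), if_neg hta,
          ihb hnb htb hSb]

theorem TEquiv.insAt {S : Finset (Fin (n+1))} {t u : PTree (n+1)} (h : TEquiv t u) :
    TEquiv (insAt S t) (insAt S u) := by
  induction h with
  | leaf i => exact TEquiv.refl _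
  | @node a b a' b' h1 h2 iha ihb =>
    have hfe := (TEquiv.node h1 h2).leafFinset_eq
    by_cases hroot : leafFinset (.node a b : PTree (n+1)) = S
    · rw [insAt_self _ _ hroot, insAt_self _ _ (hfe ▸ hroot)]
      exact TEquiv.node (TEquiv.node h1 h2) (TEquiv.refl _)
    · rw [PTree.insAt, if_neg hroot, PTree.insAt, if_neg (hfe ▸ hroot)]
      exact TEquiv.node iha ihb
  | @swap a b a' b' h1 h2 iha ihb =>
    have hfe := (TEquiv.swap h1 h2).leafFinset_eq
    by_cases hroot : leafFinset (.node a b : PTree (n+1)) = S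
    · rw [insAt_self _ _ hroot, insAt_self _ _ (hfe ▸ hroot)]
      exact TEquiv.node (TEquiv.swap h1 h2) (TEquiv.refl _)
    · rw [PTree.insAt, if_neg hroot, PTree.insAt, if_neg (hfe ▸ hroot)]
      exact TEquiv.swap iha ihb


theorem TEquiv.sing_iff {t u : PTree (n+1)} (h : TEquiv t u) {x : Fin (n+1)} :
    leaves t = [x] ↔ leaves u = [x] := by
  constructor
  · intro e
    have hp := h.perm.symm
    rw [e] at hp
    exact List.perm_singleton.1 hp
  · intro e
    have hp := h.perm
    rw [e] at hp
    exact List.perm_singleton.1 hp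

theorem TEquiv.del_sib {t u : PTree (n+1)} (h : TEquiv t u) (hn : (leaves t).Nodup) :
    TEquiv (del t) (del u) ∧ sib t = sib u := by
  induction h with
  | leaf i => exact ⟨TEquiv.refl _, rfl⟩
  | @node a b a' b' h1 h2 iha ihb =>
    obtain ⟨hna, hnb, hd⟩ := nodup_node hn
    obtain ⟨da, sa⟩ := iha hna
    obtain ⟨db, sb⟩ := ihb hnb
    by_cases ha : leaves a = [Fin.last n]
    · have ha' : leaves a' = [Fin.last n] := h1.sing_iff.1 ha
      rw [del, del, sib, sib, if_pos ha, if_pos ha', if_pos ha, if_pos ha']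
      exact ⟨h2, h2.leafFinset_eq⟩
    · have ha' : leaves a' ≠ [Fin.last n] := fun e => ha (h1.sing_iff.2 e)
      by_cases hb : leaves b = [Fin.last n]
      · have hb' : leaves b' = [Fin.last n] := h2.sing_iff.1 hb
        rw [del, del, sib, sib, if_neg ha, if_neg ha', if_neg ha, if_neg ha',
          if_pos hb, if_pos hb', if_pos hb, if_pos hb']
        exact ⟨h1, h1.leafFinset_eq⟩
      · have hb' : leaves b' ≠ [Fin.last n] := fun e => hb (h2.sing_iff.2 e)
        rw [del, del, sib, sib, if_neg ha, if_neg ha', if_neg ha, if_neg ha',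
          if_neg hb, if_neg hb', if_neg hb, if_neg hb']
        refine ⟨TEquiv.node da db, ?_⟩
        by_cases hma : Fin.last n ∈ leaves a
        · rw [if_pos hma, if_pos (h1.perm.mem_iff.1 hma)]
          exact sa
        · rw [if_neg hma, if_neg (fun hc => hma (h1.perm.mem_iff.2 hc))]
          exact sb
  | @swap a b a' b' h1 h2 iha ihb =>
    obtain ⟨hna, hnb, hd⟩ := nodup_node hn
    obtain ⟨da, sa⟩ := iha hna
    obtain ⟨db, sb⟩ := ihb hnb
    by_cases ha : leaves a = [Fin.last n]
    · have ha' : leaves a' = [Fin.last n] := h1.sing_iff.1 ha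
      by_cases hb : leaves b = [Fin.last n]
      · have hb' : leaves b' = [Fin.last n] := h2.sing_iff.1 hb
        have ea : a = .leaf (Fin.last n) := leaves_eq_singleton.1 ha
        have eb : b = .leaf (Fin.last n) := leaves_eq_singleton.1 hb
        have ea' : a' = .leaf (Fin.last n) := leaves_eq_singleton.1 ha'
        have eb' : b' = .leaf (Fin.last n) := leaves_eq_singleton.1 hb'
        subst ea eb ea' eb'
        exact ⟨TEquiv.refl _, rfl⟩
      · have hb' : leaves b' ≠ [Fin.last n] := fun e => hb (h2.sing_iff.2 e)
        rw [del, del, sib, sib, if_pos ha, if_neg hb', if_pos ha', if_pos ha,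
          if_neg hb', if_pos ha']
        exact ⟨h2, h2.leafFinset_eq⟩
    · have ha' : leaves a' ≠ [Fin.last n] := fun e => ha (h1.sing_iff.2 e)
      by_cases hb : leaves b = [Fin.last n]
      · have hb' : leaves b' = [Fin.last n] := h2.sing_iff.1 hb
        rw [del, del, sib, sib, if_neg ha, if_pos hb, if_pos hb', if_neg ha,
          if_pos hb, if_pos hb']
        exact ⟨h1, h1.leafFinset_eq⟩
      · have hb' : leaves b' ≠ [Fin.last n] := fun e => hb (h2.sing_iff.2 e)
        rw [del, del, sib, sib, if_neg ha, if_neg hb, if_neg hb', if_neg ha',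
          if_neg ha, if_neg hb, if_neg hb', if_neg ha']
        refine ⟨TEquiv.swap da db, ?_⟩
        by_cases hma : Fin.last n ∈ leaves a
        · have hmb : Fin.last n ∉ leaves b := fun hc => hd hma hc
          have hmb' : Fin.last n ∉ leaves b' := fun hc => hmb (h2.perm.mem_iff.2 hc)
          rw [if_pos hma, if_neg hmb']
          exact sa
        · rw [if_neg hma]
          by_cases hmb : Fin.last n ∈ leaves b
          · rw [if_pos (h2.perm.mem_iff.1 hmb)]
            exact sb
          · have hmb' : Fin.last n ∉ leaves b' := fun hc => hmb (h2.perm.mem_iff.2 hc)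
            have hma' : Fin.last n ∉ leaves a' := fun hc => hma (h1.perm.mem_iff.2 hc)
            rw [if_neg hmb', sib_of_not_mem hmb, sib_of_not_mem hma']


theorem leaves_del_perm {t : PTree (n+1)} (hn : (leaves t).Nodup)
    (hm : Fin.last n ∈ leaves t) (hne : leaves t ≠ [Fin.last n]) :
    (leaves (del t)).Perm ((leaves t).erase (Fin.last n)) := by
  induction t with
  | leaf i =>
    exfalso
    have : i = Fin.last n := by
      have := hm; simp [leaves] at this; omega
    exact hne (by simp [leaves, this])
  | node a b iha ihb =>
    obtain ⟨hna, hnb, hd⟩ := nodup_node hn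
    have hl : leaves (PTree.node a b) = leaves a ++ leaves b := rfl
    by_cases ha : leaves a = [Fin.last n]
    · rw [del, if_pos ha, hl, ha]
      simp only [List.singleton_append, List.erase_cons_head]
      exact List.Perm.refl _
    · by_cases hb : leaves b = [Fin.last n]
      · have hmb : Fin.last n ∈ leaves b := by rw [hb]; simp
        have hma : Fin.last n ∉ leaves a := fun hc => hd hc hmb
        rw [del, if_neg ha, if_pos hb, hl, List.erase_append_right _ hma, hb]
        simp
      · rw [del, if_neg ha, if_neg hb, hl]
        rcases (List.mem_append.1 (hl ▸ hm)) with hma | hmb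
        · have hmb : Fin.last n ∉ leaves b := fun hc => hd hma hc
          rw [del_of_not_mem hmb, List.erase_append_left _ hma]
          show (leaves (del a) ++ leaves b).Perm _
          exact (iha hna hma ha).append_right _
        · have hma : Fin.last n ∉ leaves a := fun hc => hd hc hmb
          rw [del_of_not_mem hma, List.erase_append_right _ hma]
          show (leaves a ++ leaves (del b)).Perm _
          exact (ihb hnb hmb hb).append_left _

theorem sib_mem_clades_del {t : PTree (n+1)} (hn : (leaves t).Nodup)
    (hm : Fin.last n ∈ leaves t) (hne : leaves t ≠ [Fin.last n]) :
    sib t ∈ clades (del t) := by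
  induction t with
  | leaf i =>
    exfalso
    have : i = Fin.last n := by
      have := hm; simp [leaves] at this; omega
    exact hne (by simp [leaves, this])
  | node a b iha ihb =>
    obtain ⟨hna, hnb, hd⟩ := nodup_node hn
    have hl : leaves (PTree.node a b) = leaves a ++ leaves b := rfl
    by_cases ha : leaves a = [Fin.last n]
    · rw [del, sib, if_pos ha, if_pos ha]
      exact leafFinset_mem_clades b
    · by_cases hb : leaves b = [Fin.last n]
      · rw [del, sib, if_neg ha, if_neg ha, if_pos hb, if_pos hb]
        exact leafFinset_mem_clades a
      · rw [del, sib, if_neg ha, if_neg ha, if_neg hb, if_neg hb]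
        rcases (List.mem_append.1 (hl ▸ hm)) with hma | hmb
        · have hmb : Fin.last n ∉ leaves b := fun hc => hd hma hc
          rw [if_pos hma, del_of_not_mem hmb]
          have := iha hna hma ha
          simp only [clades, Finset.mem_insert, Finset.mem_union]
          exact Or.inr (Or.inl this)
        · have hma : Fin.last n ∉ leaves a := fun hc => hd hc hmb
          rw [if_neg hma, del_of_not_mem hma]
          have := ihb hnb hmb hb
          simp only [clades, Finset.mem_insert, Finset.mem_union]
          exact Or.inr (Or.inr this)

theorem sib_nonempty {t : PTree (n+1)} (hn : (leaves t).Nodup)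
    (hm : Fin.last n ∈ leaves t) (hne : leaves t ≠ [Fin.last n]) :
    (sib t).Nonempty :=
  clades_nonempty (sib_mem_clades_del hn hm hne)

theorem insAt_sib_del {t : PTree (n+1)} (hn : (leaves t).Nodup)
    (hm : Fin.last n ∈ leaves t) (hne : leaves t ≠ [Fin.last n]) :
    TEquiv (insAt (sib t) (del t)) t := by
  induction t with
  | leaf i =>
    exfalso
    have : i = Fin.last n := by
      have := hm; simp [leaves] at this; omega
    exact hne (by simp [leaves, this])
  | node a b iha ihb =>
    obtain ⟨hna, hnb, hd⟩ := nodup_node hn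
    have hl : leaves (PTree.node a b) = leaves a ++ leaves b := rfl
    by_cases ha : leaves a = [Fin.last n]
    · rw [del, sib, if_pos ha, if_pos ha, insAt_self _ _ rfl]
      have ea : a = .leaf (Fin.last n) := leaves_eq_singleton.1 ha
      rw [ea]
      exact TEquiv.swap (TEquiv.refl b) (TEquiv.refl _)
    · by_cases hb : leaves b = [Fin.last n]
      · rw [del, sib, if_neg ha, if_neg ha, if_pos hb, if_pos hb, insAt_self _ _ rfl]
        have eb : b = .leaf (Fin.last n) := leaves_eq_singleton.1 hb
        rw [eb]
        exact TEquiv.refl _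
      · rw [del, sib, if_neg ha, if_neg ha, if_neg hb, if_neg hb]
        rcases (List.mem_append.1 (hl ▸ hm)) with hma | hmb
        · have hmb : Fin.last n ∉ leaves b := fun hc => hd hma hc
          rw [if_pos hma, del_of_not_mem hmb]
          have hsne : (sib a).Nonempty := sib_nonempty hna hma ha
          have hsub : sib a ⊆ leafFinset a := sib_subset a
          -- root leaf set differs from `sib a`
          obtain ⟨x, hx⟩ := leafFinset_nonempty b
          have hxa : x ∉ leafFinset a := fun hc =>
            hd (mem_leafFinset.1 hc) (mem_leafFinset.1 hx)
          have hroot : leafFinset (.node (del a) b : PTree (n+1)) ≠ sib a := by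
            intro e
            have : x ∈ sib a := by
              rw [← e, leafFinset_node]
              exact Finset.mem_union_right _ hx
            exact hxa (hsub this)
          have hbnot : sib a ∉ clades b := by
            intro hc
            obtain ⟨y, hy⟩ := hsne
            exact hd (mem_leafFinset.1 (hsub hy)) (mem_leafFinset.1 (clades_subset hc hy))
          rw [insAt, if_neg hroot, insAt_of_not_mem hbnot]
          exact TEquiv.node (iha hna hma ha) (TEquiv.refl b)
        · have hma : Fin.last n ∉ leaves a := fun hc => hd hc hmb
          rw [if_neg hma, del_of_not_mem hma]
          have hsne : (sib b).Nonempty := sib_nonempty hnb hmb hb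
          have hsub : sib b ⊆ leafFinset b := sib_subset b
          obtain ⟨x, hx⟩ := leafFinset_nonempty a
          have hxb : x ∉ leafFinset b := fun hc =>
            hd (mem_leafFinset.1 hx) (mem_leafFinset.1 hc)
          have hroot : leafFinset (.node a (del b) : PTree (n+1)) ≠ sib b := by
            intro e
            have : x ∈ sib b := by
              rw [← e, leafFinset_node]
              exact Finset.mem_union_left _ hx
            exact hxb (hsub this)
          have hanot : sib b ∉ clades a := by
            intro hc
            obtain ⟨y, hy⟩ := hsne
            exact hd (mem_leafFinset.1 (clades_subset hc hy)) (mem_leafFinset.1 (hsub hy))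
          rw [insAt, if_neg hroot, insAt_of_not_mem hanot]
          exact TEquiv.node (TEquiv.refl a) (ihb hnb hmb hb)

theorem top_not_mem_del {t : PTree (n+1)} (hn : (leaves t).Nodup)
    (hm : Fin.last n ∈ leaves t) (hne : leaves t ≠ [Fin.last n]) :
    Fin.last n ∉ leaves (del t) := by
  intro hc
  have := (leaves_del_perm hn hm hne).mem_iff.1 hc
  exact (hn.not_mem_erase) this

theorem top_not_mem_sib {t : PTree (n+1)} (hn : (leaves t).Nodup)
    (hm : Fin.last n ∈ leaves t) (hne : leaves t ≠ [Fin.last n]) :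
    Fin.last n ∉ sib t := by
  intro hc
  have h1 := clades_subset (sib_mem_clades_del hn hm hne) hc
  exact top_not_mem_del hn hm hne (mem_leafFinset.1 h1)

end Top

section Count

/-- The quotient type in the theorem. -/
abbrev QT (k : ℕ) := Quot (fun a b : {t : PTree k // t.Labelled} => PTree.TEquiv a.1 b.1)

variable {k : ℕ}

theorem labelled_length {t : PTree k} (ht : t.Labelled) : (leaves t).length = k := by
  have h1 : (leaves t).toFinset = Finset.univ :=
    Finset.eq_univ_iff_forall.2 (fun i => List.mem_toFinset.2 (ht.2 i))
  have h2 := List.toFinset_card_of_nodup ht.1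
  rw [h1] at h2
  simpa using h2.symm

/-- Clades of an equivalence class. -/
def cladesQ (k : ℕ) : QT k → Finset (Finset (Fin k)) :=
  Quot.lift (fun t => clades t.1) (fun _ _ h => h.clades_eq)

theorem cladesQ_card (q : QT k) : (cladesQ k q).card = 2 * k - 1 := by
  induction q using Quot.ind with
  | _ t => rw [cladesQ, clades_card t.2.1, labelled_length t.2]

theorem exists_labelled : ∀ m : ℕ, Nonempty {t : PTree (m+1) // t.Labelled} := by
  intro m
  induction m with
  | zero =>
    refine ⟨⟨.leaf 0, ?_, ?_⟩⟩
    · simp [leaves]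
    · intro i
      have : i = 0 := Fin.ext (by omega)
      simp [leaves, this]
  | succ m ih =>
    obtain ⟨⟨t, hnd, hmem⟩⟩ := ih
    refine ⟨⟨.node (pmap Fin.castSucc t) (.leaf (Fin.last (m+1))), ?_, ?_⟩⟩
    · show (leaves (pmap Fin.castSucc t) ++ leaves (.leaf (Fin.last (m+1)) : PTree (m+2))).Nodup
      rw [List.nodup_append, leaves_pmap]
      refine ⟨hnd.map (Fin.castSucc_injective _), by simp [leaves], ?_⟩
      intro x hx y hy' hxy
      have hy : x ∈ leaves (.leaf (Fin.last (m+1)) : PTree (m+2)) := hxy ▸ hy'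
      simp only [leaves, List.mem_singleton] at hy
      obtain ⟨j, _, rfl⟩ := List.mem_map.1 hx
      exact absurd hy (Fin.ne_of_lt (Fin.castSucc_lt_last j))
    · intro i
      show i ∈ leaves (pmap Fin.castSucc t) ++ leaves (.leaf (Fin.last (m+1)) : PTree (m+2))
      rcases Fin.eq_castSucc_or_eq_last i with ⟨j, rfl⟩ | rfl
      · exact List.mem_append_left _ (by
          rw [leaves_pmap]; exact List.mem_map.2 ⟨j, hmem j, rfl⟩)
      · exact List.mem_append_right _ (by simp [leaves])

/-- Map `Fin (k+1)` down to `Fin k` (junk at the last element). -/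
def dwn (hk : 1 ≤ k) : Fin (k+1) → Fin k :=
  fun i => if h : i.1 < k then ⟨i.1, h⟩ else ⟨0, hk⟩

theorem dwn_castSucc (hk : 1 ≤ k) (j : Fin k) : dwn hk (Fin.castSucc j) = j := by
  have : (Fin.castSucc j).1 < k := j.isLt
  simp only [dwn, dif_pos this]
  exact Fin.ext rfl

theorem castSucc_dwn (hk : 1 ≤ k) {i : Fin (k+1)} (h : i ≠ Fin.last k) :
    Fin.castSucc (dwn hk i) = i := by
  have h1 : i.1 ≠ k := fun e => h (Fin.ext (by simp [e]))
  have hi : i.1 < k := by have := i.isLt; omega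
  apply Fin.ext
  simp [dwn, dif_pos hi]

theorem labelled_leaves_ne (hk : 1 ≤ k) {t : PTree (k+1)} (ht : t.Labelled) :
    leaves t ≠ [Fin.last k] := by
  intro e
  have := labelled_length ht
  rw [e] at this
  simp at this
  omega

theorem castSucc_not_last {t : PTree k} : Fin.last k ∉ leaves (pmap Fin.castSucc t) := by
  rw [leaves_pmap]
  intro hc
  obtain ⟨j, _, hj⟩ := List.mem_map.1 hc
  exact absurd hj (Fin.ne_of_lt (Fin.castSucc_lt_last j))

/-- Forward: delete the last leaf and push labels down. -/
def fwdTree (hk : 1 ≤ k) (t : PTree (k+1)) : PTree k := pmap (dwn hk) (del t)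

def fwdSet (hk : 1 ≤ k) (t : PTree (k+1)) : Finset (Fin k) := (sib t).image (dwn hk)

theorem fwdTree_labelled (hk : 1 ≤ k) {t : PTree (k+1)} (ht : t.Labelled) :
    (fwdTree hk t).Labelled := by
  obtain ⟨hn, hsurj⟩ := ht
  have hm := hsurj (Fin.last k)
  have hne := labelled_leaves_ne hk ⟨hn, hsurj⟩
  have hperm := leaves_del_perm hn hm hne
  have htop := top_not_mem_del hn hm hne
  have hnd : (leaves (del t)).Nodup := hperm.nodup_iff.2 (hn.erase _)
  constructor
  · rw [fwdTree, leaves_pmap]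
    refine hnd.map_on ?_
    intro x hx y hy hxy
    have hxl : x ≠ Fin.last k := fun e => htop (e ▸ hx)
    have hyl : y ≠ Fin.last k := fun e => htop (e ▸ hy)
    rw [← castSucc_dwn hk hxl, ← castSucc_dwn hk hyl, hxy]
  · intro j
    rw [fwdTree, leaves_pmap]
    have h1 : Fin.castSucc j ∈ leaves t := hsurj _
    have h2 : Fin.castSucc j ≠ Fin.last k := Fin.ne_of_lt (Fin.castSucc_lt_last j)
    have h3 : Fin.castSucc j ∈ (leaves t).erase (Fin.last k) :=
      (List.mem_erase_of_ne h2).2 h1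
    have h4 : Fin.castSucc j ∈ leaves (del t) := hperm.mem_iff.2 h3
    exact List.mem_map.2 ⟨_, h4, dwn_castSucc hk j⟩

theorem fwdSet_mem (hk : 1 ≤ k) {t : PTree (k+1)} (ht : t.Labelled) :
    fwdSet hk t ∈ clades (fwdTree hk t) := by
  rw [fwdTree, clades_pmap, fwdSet]
  exact Finset.mem_image_of_mem _
    (sib_mem_clades_del ht.1 (ht.2 _) (labelled_leaves_ne hk ht))

theorem sigma_subtype_ext {α : Type*} {β : Type*} {P : α → β → Prop} {a a' : α}
    {b b' : β} (ha : a = a') (hb : b = b') {h1 : P a b} {h2 : P a' b'} :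
    (⟨a, ⟨b, h1⟩⟩ : Σ x : α, {y // P x y}) = ⟨a', ⟨b', h2⟩⟩ := by
  subst ha; subst hb; rfl

/-- Forward map on representatives. -/
def Fsub (hk : 1 ≤ k) (t : {t : PTree (k+1) // t.Labelled}) :
    Σ q : QT k, {S : Finset (Fin k) // S ∈ cladesQ k q} :=
  ⟨Quot.mk _ ⟨fwdTree hk t.1, fwdTree_labelled hk t.2⟩,
    ⟨fwdSet hk t.1, fwdSet_mem hk t.2⟩⟩

theorem Fsub_sound (hk : 1 ≤ k) (a b : {t : PTree (k+1) // t.Labelled}) (h : TEquiv a.1 b.1) :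
    Fsub hk a = Fsub hk b := by
  obtain ⟨hdel, hsib⟩ := h.del_sib a.2.1
  unfold Fsub
  exact sigma_subtype_ext (P := fun q S => S ∈ cladesQ k q)
    (Quot.sound (show TEquiv (fwdTree hk a.1) (fwdTree hk b.1) from hdel.pmap))
    (by rw [fwdSet, fwdSet, hsib])

/-- Forward map on the quotient. -/
def Fq (hk : 1 ≤ k) : QT (k+1) → Σ q : QT k, {S : Finset (Fin k) // S ∈ cladesQ k q} :=
  Quot.lift (Fsub hk) (Fsub_sound hk)

/-- Backward: insert the new leaf at clade `S` after pushing labels up. -/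
def bwdTree (t : PTree k) (S : Finset (Fin k)) : PTree (k+1) :=
  insAt (S.image Fin.castSucc) (pmap Fin.castSucc t)

theorem up_nodup {t : PTree k} (ht : t.Labelled) :
    (leaves (pmap Fin.castSucc t)).Nodup := by
  rw [leaves_pmap]
  exact ht.1.map (Fin.castSucc_injective _)

theorem up_clades {t : PTree k} {S : Finset (Fin k)} (hS : S ∈ clades t) :
    S.image Fin.castSucc ∈ clades (pmap Fin.castSucc t) := by
  rw [clades_pmap]
  exact Finset.mem_image_of_mem _ hS

theorem bwd_labelled {t : PTree k} {S : Finset (Fin k)} (ht : t.Labelled)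
    (hS : S ∈ clades t) : (bwdTree t S).Labelled := by
  have hperm := leaves_insAt_perm (up_nodup ht) (up_clades hS)
  constructor
  · refine hperm.nodup_iff.2 ?_
    refine List.nodup_cons.2 ⟨castSucc_not_last, up_nodup ht⟩
  · intro i
    refine hperm.mem_iff.2 ?_
    rcases Fin.eq_castSucc_or_eq_last i with ⟨j, rfl⟩ | rfl
    · refine List.mem_cons_of_mem _ ?_
      rw [leaves_pmap]
      exact List.mem_map.2 ⟨j, ht.2 j, rfl⟩
    · exact List.mem_cons_self

/-- Backward map on representatives (junk value when `S` is not a clade). -/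
noncomputable def Gsub (hk : 1 ≤ k) (t : {t : PTree k // t.Labelled}) (S : Finset (Fin k)) :
    QT (k+1) :=
  if hS : S ∈ clades t.1 then Quot.mk _ ⟨bwdTree t.1 S, bwd_labelled t.2 hS⟩
  else Quot.mk _ (Classical.choice (by
    obtain ⟨m, rfl⟩ : ∃ m, k = m + 1 := ⟨k - 1, by omega⟩
    exact exists_labelled (m+1)))

theorem Gsub_sound (hk : 1 ≤ k) (a b : {t : PTree k // t.Labelled}) (h : TEquiv a.1 b.1) :
    Gsub hk a = Gsub hk b := by
  have hc := h.clades_eq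
  funext S
  by_cases hS : S ∈ clades a.1
  · have hS' : S ∈ clades b.1 := by rw [← hc]; exact hS
    rw [Gsub, dif_pos hS, Gsub, dif_pos hS']
    exact Quot.sound (h.pmap.insAt)
  · have hS' : S ∉ clades b.1 := by rw [← hc]; exact hS
    rw [Gsub, dif_neg hS, Gsub, dif_neg hS']


/-- Backward map on the quotient. -/
noncomputable def Gq (hk : 1 ≤ k) :
    (Σ q : QT k, {S : Finset (Fin k) // S ∈ cladesQ k q}) → QT (k+1) :=
  fun p => Quot.lift (Gsub hk) (Gsub_sound hk) p.1 p.2.1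

theorem Gq_Fq (hk : 1 ≤ k) : ∀ q : QT (k+1), Gq hk (Fq hk q) = q := by
  intro q
  induction q using Quot.ind with
  | _ t =>
    obtain ⟨t, ht⟩ := t
    show Gsub hk ⟨fwdTree hk t, fwdTree_labelled hk ht⟩ (fwdSet hk t) = _
    rw [Gsub, dif_pos (fwdSet_mem hk ht)]
    refine Quot.sound ?_
    show TEquiv (bwdTree (fwdTree hk t) (fwdSet hk t)) t
    have hn := ht.1
    have hm := ht.2 (Fin.last k)
    have hne := labelled_leaves_ne hk ht
    have htopsib := top_not_mem_sib hn hm hne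
    have htopdel := top_not_mem_del hn hm hne
    have h1 : (fwdSet hk t).image Fin.castSucc = sib t := by
      rw [fwdSet, Finset.image_image]
      exact image_eq_id (fun x hx => castSucc_dwn hk (fun e => htopsib (e ▸ hx)))
    have h2 : pmap Fin.castSucc (fwdTree hk t) = del t := by
      rw [fwdTree, pmap_pmap]
      exact pmap_eq_id (fun i hi => castSucc_dwn hk (fun e => htopdel (e ▸ hi)))
    rw [bwdTree, h1, h2]
    exact insAt_sib_del hn hm hne

theorem Fq_Gq (hk : 1 ≤ k) :
    ∀ p : Σ q : QT k, {S : Finset (Fin k) // S ∈ cladesQ k q},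
      Fq hk (Gq hk p) = p := by
  rintro ⟨q, S, hS⟩
  induction q using Quot.ind with
  | _ t =>
    have hS' : S ∈ clades t.1 := hS
    show Fq hk (Gsub hk t S) = _
    rw [Gsub, dif_pos hS']
    show Fsub hk ⟨bwdTree t.1 S, bwd_labelled t.2 hS'⟩ = ⟨Quot.mk _ t, ⟨S, hS⟩⟩
    unfold Fsub
    have hnu := up_nodup t.2
    have htopu : Fin.last k ∉ leaves (pmap Fin.castSucc t.1) := castSucc_not_last
    have hcu := up_clades hS'
    have hdel : del (bwdTree t.1 S) = pmap Fin.castSucc t.1 :=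
      del_insAt hnu htopu hcu
    have hsib : sib (bwdTree t.1 S) = S.image Fin.castSucc :=
      sib_insAt hnu htopu hcu
    refine sigma_subtype_ext (P := fun q S => S ∈ cladesQ k q) ?_ ?_
    · have h3 : fwdTree hk (bwdTree t.1 S) = t.1 := by
        rw [fwdTree, hdel, pmap_pmap]
        exact pmap_eq_id (fun i _ => dwn_castSucc hk i)
      exact congrArg (Quot.mk _) (Subtype.ext h3)
    · rw [fwdSet, hsib, Finset.image_image]
      exact image_eq_id (fun x _ => dwn_castSucc hk x)

theorem step_equiv (hk : 1 ≤ k) :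
    Nonempty (QT (k+1) ≃ Σ q : QT k, {S : Finset (Fin k) // S ∈ cladesQ k q}) :=
  ⟨⟨Fq hk, Gq hk, Gq_Fq hk, Fq_Gq hk⟩⟩

theorem base_equiv : Nonempty (QT 1 ≃ Fin 1) := by
  have huniq : ∀ t : {t : PTree 1 // t.Labelled}, t.1 = .leaf 0 := by
    rintro ⟨t, hnd, hmem⟩
    cases t with
    | leaf i =>
      have : i = 0 := Fin.ext (by omega)
      subst this
      rfl
    | node a b =>
      exfalso
      obtain ⟨x, hx⟩ := List.exists_mem_of_ne_nil _ (leaves_ne_nil a)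
      obtain ⟨y, hy⟩ := List.exists_mem_of_ne_nil _ (leaves_ne_nil b)
      obtain ⟨-, -, hd⟩ := nodup_node hnd
      have hxy : x = y := Fin.ext (by omega)
      exact hd hx (hxy ▸ hy)
  have e0 : {t : PTree 1 // t.Labelled} := ⟨.leaf 0, by simp [leaves], by
    intro i
    have : i = 0 := Fin.ext (by omega)
    simp [leaves, this]⟩
  refine ⟨⟨fun _ => 0, fun _ => Quot.mk _ e0, ?_, ?_⟩⟩
  · intro q
    induction q using Quot.ind with
    | _ t =>
      refine Quot.sound ?_
      show TEquiv e0.1 t.1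
      rw [huniq t, huniq e0]
      exact TEquiv.refl _
  · intro i
    exact Fin.ext (by omega)

theorem main_equiv : ∀ k, 1 ≤ k →
    Nonempty (QT k ≃ Fin (Nat.doubleFactorial (2*k-3))) := by
  intro k hk
  induction k, hk using Nat.le_induction with
  | base =>
    have h : Nat.doubleFactorial (2*1-3) = 1 := by norm_num [Nat.doubleFactorial]
    rw [h]
    exact base_equiv
  | succ k hk ih =>
    obtain ⟨e⟩ := ih
    obtain ⟨E⟩ := step_equiv hk
    have feq : ∀ q : QT k, {S : Finset (Fin k) // S ∈ cladesQ k q} ≃ Fin (2*k-1) :=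
      fun q => (Fintype.equivFin _).trans (finCongr (by
        rw [show Fintype.card {S : Finset (Fin k) // S ∈ cladesQ k q} =
          (cladesQ k q).card from Fintype.card_coe _]
        exact cladesQ_card q))
    have harith : Nat.doubleFactorial (2*k-3) * (2*k-1) =
        Nat.doubleFactorial (2*(k+1)-3) := by
      rcases eq_or_lt_of_le hk with h1 | h2
      · rw [← h1]
        norm_num [Nat.doubleFactorial]
      · have e1 : 2*(k+1)-3 = (2*k-3)+2 := by omega
        have e2 : 2*k-3+2 = 2*k-1 := by omega
        rw [e1, Nat.doubleFactorial_add_two, e2]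
        exact Nat.mul_comm _ _
    exact ⟨((((E.trans (Equiv.sigmaCongrRight feq)).trans
      (Equiv.sigmaEquivProd (QT k) (Fin (2*k-1)))).trans
      (Equiv.prodCongr e (Equiv.refl _))).trans finProdFinEquiv).trans
      (finCongr harith)⟩

end Count

end PTree

/-- The number of non-planar full binary rooted trees with `n ≥ 1` labelled leaves
equals the odd double factorial `(2n-3)!!` (with `(-1)!! = 1`, here `2*1-3 = 0` in ℕ). -/
theorem stmt0 (n : ℕ) (hn : 1 ≤ n) :
    Nat.card (Quot (fun a b : {t : PTree n // t.Labelled} => PTree.TEquiv a.1 b.1)) =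
      Nat.doubleFactorial (2 * n - 3) := by
  obtain ⟨e⟩ := PTree.main_equiv n hn
  exact Nat.card_eq_of_equiv_fin e
end

section
/- Let X be a finite set, p : X → Y surjective, and K a p-symmetric nonnegative irreducible matrix on X with Perron-Frobenius eigenvalue λ. Let η_Y be the positive right eigenvector of K^R and ψ_Y the positive left eigenvector of K^R (∑_y ψ_Y(y) K^R(y,y') = λ ψ_Y(y')). Then the function π(x) = η_Y(p(x)) ψ_Y(p(x)) / c_{p(x)}, with c_y = #p^{-1}(y), is a stationary distribution (up to normalization) of the Markov chain K̂(x,x') = λ^{-1} (η_X(x')/η_X(x)) K(x,x') where η_X(x) = η_Y(p(x)): that is, ∑_x π(x) K̂(x,x') = π(x') for all x'. -/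
open Finset

/-- For a `p`-symmetric nonnegative irreducible matrix `K` on a finite set `X`, with
Perron-Frobenius eigenvalue `lam`, positive right eigenvector `etaY` and positive
left eigenvector `psiY` of the induced matrix `KR` on `Y`, the function
`π(x) = etaY (p x) · psiY (p x) / c_{p x}` (with `c_y = #p⁻¹(y)`) is stationary
(up to normalization) for the Markov chain
`K̂(x,x') = lam⁻¹ (etaX x' / etaX x) K x x'` with `etaX x = etaY (p x)`. -/
theorem stmt9 {X Y : Type*} [Fintype X] [Fintype Y] [DecidableEq Y]
    (p : X → Y) (hp : Function.Surjective p)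
    (K : Matrix X X ℝ) (hKnn : ∀ x x', 0 ≤ K x x')
    (hirr : ∀ x x' : X, Relation.ReflTransGen (fun a b => K a b ≠ 0) x x')
    (KR KL : Matrix Y Y ℝ)
    (hR : ∀ (x : X) (y' : Y),
      ∑ x' ∈ univ.filter (fun x' => p x' = y'), K x x' = KR (p x) y')
    (hL : ∀ (x' : X) (y : Y),
      ∑ x ∈ univ.filter (fun x => p x = y), K x x' = KL y (p x'))
    (lam : ℝ) (hlam : 0 < lam)
    (etaY psiY : Y → ℝ) (hetaPos : ∀ y, 0 < etaY y) (hpsiPos : ∀ y, 0 < psiY y)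
    (heigR : ∀ y, ∑ y', KR y y' * etaY y' = lam * etaY y)
    (heigL : ∀ y', ∑ y, psiY y * KR y y' = lam * psiY y') :
    ∀ x' : X,
      ∑ x, (etaY (p x) * psiY (p x) / ((univ.filter (fun z => p z = p x)).card : ℝ)) *
          (lam⁻¹ * (etaY (p x') / etaY (p x)) * K x x') =
        etaY (p x') * psiY (p x') / ((univ.filter (fun z => p z = p x')).card : ℝ) := by
  intro x'
  set c : Y → ℝ := fun y => ((univ.filter (fun z => p z = y)).card : ℝ) with hc
  have hcpos : ∀ y, 0 < c y := by
    intro y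
    obtain ⟨x, hx⟩ := hp y
    have : x ∈ univ.filter (fun z => p z = y) := by simp [hx]
    simp only [hc]
    exact_mod_cast Finset.card_pos.2 ⟨x, this⟩
  have key : ∀ y y', c y * KR y y' = c y' * KL y y' := by
    intro y y'
    have h1 : ∑ x ∈ univ.filter (fun x => p x = y),
        ∑ x'' ∈ univ.filter (fun z => p z = y'), K x x'' = c y * KR y y' := by
      rw [Finset.sum_congr rfl (fun x hx => by
        rw [hR x y', (Finset.mem_filter.1 hx).2])]
      rw [Finset.sum_const, nsmul_eq_mul]
    have h2 : ∑ x'' ∈ univ.filter (fun z => p z = y'),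
        ∑ x ∈ univ.filter (fun x => p x = y), K x x'' = c y' * KL y y' := by
      rw [Finset.sum_congr rfl (fun x'' hx => by
        rw [hL x'' y, (Finset.mem_filter.1 hx).2])]
      rw [Finset.sum_const, nsmul_eq_mul]
    rw [← h1, ← h2, Finset.sum_comm]
  -- group the sum by fibers of p
  rw [← Finset.sum_fiberwise univ p
    (fun x => (etaY (p x) * psiY (p x) / ((univ.filter (fun z => p z = p x)).card : ℝ)) *
          (lam⁻¹ * (etaY (p x') / etaY (p x)) * K x x'))]
  have step : ∀ y, ∑ x ∈ univ.filter (fun x => p x = y),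
      (etaY (p x) * psiY (p x) / ((univ.filter (fun z => p z = p x)).card : ℝ)) *
          (lam⁻¹ * (etaY (p x') / etaY (p x)) * K x x')
      = lam⁻¹ * etaY (p x') / c (p x') * (psiY y * KR y (p x')) := by
    intro y
    have : ∑ x ∈ univ.filter (fun x => p x = y),
        (etaY (p x) * psiY (p x) / ((univ.filter (fun z => p z = p x)).card : ℝ)) *
            (lam⁻¹ * (etaY (p x') / etaY (p x)) * K x x')
        = (etaY y * psiY y / c y) * (lam⁻¹ * (etaY (p x') / etaY y)) *
            ∑ x ∈ univ.filter (fun x => p x = y), K x x' := by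
      rw [Finset.mul_sum]
      refine Finset.sum_congr rfl (fun x hx => ?_)
      rw [(Finset.mem_filter.1 hx).2]
      ring
    rw [this, hL x' y]
    have hKL : KL y (p x') = c y * KR y (p x') / c (p x') := by
      rw [key y (p x'), mul_div_cancel_left₀ _ (hcpos (p x')).ne']
    rw [hKL]
    have h1 := (hcpos y).ne'
    have h2 := (hcpos (p x')).ne'
    have h3 := (hetaPos y).ne'
    field_simp
  rw [Finset.sum_congr rfl (fun y _ => step y), ← Finset.mul_sum, heigL (p x')]
  rw [show ((univ.filter (fun z => p z = p x')).card : ℝ) = c (p x') from rfl]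
  have hl : lam⁻¹ * etaY (p x') / c (p x') * (lam * psiY (p x')) =
      (lam⁻¹ * lam) * (etaY (p x') * psiY (p x') / c (p x')) := by ring
  rw [hl, inv_mul_cancel₀ hlam.ne', one_mul]
end

section
/- For every n ≥ 4, the directed graph on the set P'(n) of partitions of n other than {1,1,...,1}, with an EM-edge from p to p' whenever p' is obtained from p by replacing two parts k_i, k_j by the single part k_i + k_j, and an SM-edge from p to p' whenever p' is obtained from p by removing two units from one part k_i ≥ 3 (giving parts 2 and k_i - 2, dropping any resulting zero part is not needed since k_i - 2 ≥ 1) or removing one unit from each of two parts k_i, k_j ≥ 1 not both resulting in zero (giving parts 2, k_i - 1, k_j - 1, with zero parts deleted), is strongly connected. -/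
/-- A multiset of positive integers summing to `n`, i.e. a partition of `n`. -/
def IsPartitionOf (n : ℕ) (p : Multiset ℕ) : Prop :=
  (∀ m ∈ p, 0 < m) ∧ p.sum = n

/-- A vertex of the graph on `P'(n)`: a partition of `n` other than `{1,…,1}`. -/
def PVertex (n : ℕ) (p : Multiset ℕ) : Prop :=
  IsPartitionOf n p ∧ p ≠ Multiset.replicate n 1

/-- External Merge edge: two parts `i, j` are replaced by the single part `i + j`. -/
def EMStep (p p' : Multiset ℕ) : Prop :=
  ∃ (i j : ℕ) (q : Multiset ℕ), p = i ::ₘ j ::ₘ q ∧ p' = (i + j) ::ₘ q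

/-- Minimal Sideward Merge edge: either remove two units from a single part `k ≥ 3`
(giving new parts `2` and `k - 2`), or remove one unit from each of two parts `i, j`
not both becoming zero (giving new parts `2, i - 1, j - 1`, with zero parts deleted). -/
def SMStep (p p' : Multiset ℕ) : Prop :=
  (∃ (m : ℕ) (q : Multiset ℕ), p = m ::ₘ q ∧ 3 ≤ m ∧ p' = 2 ::ₘ (m - 2) ::ₘ q) ∨
  (∃ (i j : ℕ) (q : Multiset ℕ), p = i ::ₘ j ::ₘ q ∧ ¬(i = 1 ∧ j = 1) ∧
      p' = (2 ::ₘ q) + Multiset.filter (fun m => m ≠ 0) ((i - 1) ::ₘ {j - 1}))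

/-- An edge of the EM–SM graph on partitions. -/
def MergeStep (p p' : Multiset ℕ) : Prop := EMStep p p' ∨ SMStep p p'

/-- An edge of the EM–SM graph staying within the vertex set `P'(n)`. -/
def StepOn (n : ℕ) (p p' : Multiset ℕ) : Prop :=
  MergeStep p p' ∧ PVertex n p ∧ PVertex n p'

/-!
Every vertex reaches the one-part partition `{n}` by EM steps, so it suffices to reach every
vertex from `{n}`. An SM step splits a part `M ≥ 3` as `2 + (M - 2)`, and one unit moves from a
part `b ≥ 2` to any other part `a`: an SM step on `a, b` followed by an EM step joining the new
part `2` with `a - 1` (for `a = 1` the SM step alone, as the zero part is deleted). Together these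
split a part `M ≥ 3` into any two positive parts, which builds every partition with a part `≥ 2`
out of `{n}`. Finally, the target of an edge is a vertex whenever its source is, so these paths
never leave `P'(n)`.
-/

open Relation Multiset

lemma pVertex_iff {n : ℕ} {p : Multiset ℕ} :
    PVertex n p ↔ IsPartitionOf n p ∧ ∃ m ∈ p, 2 ≤ m := by
  refine and_congr_right fun hp => ⟨fun hne => ?_, ?_⟩
  · by_contra! hsmall
    have hone : ∀ m ∈ p, m = 1 := fun m hm => by
      have := hp.1 m hm; have := hsmall m hm; omega
    apply hne
    rw [eq_replicate_card.2 hone, ← hp.2, eq_replicate_card.2 hone]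
    simp
  · rintro ⟨m, hm, h2⟩ rfl
    have := eq_of_mem_replicate hm
    omega

lemma PVertex.ne_zero {n : ℕ} {p : Multiset ℕ} (hp : PVertex n p) : p ≠ 0 := by
  rintro rfl
  obtain ⟨m, hm, -⟩ := (pVertex_iff.1 hp).2
  simp at hm

lemma Multiset.sum_filter_ne_zero {M : Type*} [AddCommMonoid M] [DecidableEq M]
    (s : Multiset M) : (s.filter (· ≠ 0)).sum = s.sum := by
  conv_rhs => rw [← filter_add_not (· ≠ 0) s]
  rw [sum_add, sum_eq_zero (s := s.filter fun a => ¬a ≠ 0) (by simp), add_zero]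

lemma MergeStep.isPartitionOf {n : ℕ} {p p' : Multiset ℕ} (h : MergeStep p p')
    (hp : IsPartitionOf n p) : IsPartitionOf n p' := by
  obtain ⟨hpos, rfl⟩ := hp
  rcases h with ⟨i, j, q, rfl, rfl⟩ | ⟨m, q, rfl, hm, rfl⟩ | ⟨i, j, q, rfl, -, rfl⟩
  all_goals simp only [mem_cons, forall_eq_or_imp] at hpos
  · refine ⟨?_, by simp [add_assoc]⟩
    simpa [forall_eq_or_imp, hpos.1] using hpos.2.2
  · refine ⟨?_, by simp; omega⟩
    simpa [forall_eq_or_imp, show 0 < m - 2 by omega] using hpos.2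
  · refine ⟨?_, by simp [sum_filter_ne_zero]; omega⟩
    simpa [forall_eq_or_imp, or_imp, forall_and, Nat.pos_iff_ne_zero] using hpos.2.2

lemma MergeStep.exists_two_le {p p' : Multiset ℕ} (h : MergeStep p p')
    (hpos : ∀ m ∈ p, 0 < m) : ∃ m ∈ p', 2 ≤ m := by
  rcases h with ⟨i, j, q, rfl, rfl⟩ | ⟨m, q, -, -, rfl⟩ | ⟨i, j, q, -, -, rfl⟩
  · exact ⟨i + j, mem_cons_self _ _, by
      have := hpos i (by simp); have := hpos j (by simp); omega⟩
  · exact ⟨2, mem_cons_self _ _, le_rfl⟩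
  · exact ⟨2, by simp, le_rfl⟩

lemma MergeStep.pVertex {n : ℕ} {p p' : Multiset ℕ} (h : MergeStep p p')
    (hp : PVertex n p) : PVertex n p' :=
  pVertex_iff.2 ⟨h.isPartitionOf hp.1, h.exists_two_le hp.1.1⟩

lemma reflTransGen_stepOn_of_mergeStep {n : ℕ} {p p' : Multiset ℕ}
    (h : ReflTransGen MergeStep p p') (hp : PVertex n p) : ReflTransGen (StepOn n) p p' := by
  induction h using ReflTransGen.head_induction_on with
  | refl => exact .refl
  | head hstep _ ih => exact .head ⟨hstep, hp, hstep.pVertex hp⟩ (ih (hstep.pVertex hp))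

lemma MergeStep.cons {p p' : Multiset ℕ} (a : ℕ) (h : MergeStep p p') :
    MergeStep (a ::ₘ p) (a ::ₘ p') := by
  rcases h with ⟨i, j, q, rfl, rfl⟩ | ⟨m, q, rfl, hm, rfl⟩ | ⟨i, j, q, rfl, hij, rfl⟩
  · exact Or.inl ⟨i, j, a ::ₘ q, by simp only [cons_swap], by simp only [cons_swap]⟩
  · exact Or.inr <| Or.inl ⟨m, a ::ₘ q, cons_swap _ _ _, hm, by simp only [cons_swap]⟩
  · refine Or.inr <| Or.inr ⟨i, j, a ::ₘ q, by simp only [cons_swap], hij, ?_⟩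
    simp only [cons_add, cons_swap]

lemma reflTransGen_mergeStep_cons {p p' : Multiset ℕ} (a : ℕ)
    (h : ReflTransGen MergeStep p p') : ReflTransGen MergeStep (a ::ₘ p) (a ::ₘ p') :=
  ReflTransGen.lift (a ::ₘ ·) (fun _ _ => MergeStep.cons a) _ _ h

lemma reflTransGen_mergeStep_singleton_sum {p : Multiset ℕ} (hp : p ≠ 0) :
    ReflTransGen MergeStep p {p.sum} := by
  induction p using Multiset.induction_on with
  | empty => exact absurd rfl hp
  | cons a q ih =>
    rcases eq_or_ne q 0 with rfl | hq
    · simp [ReflTransGen.refl]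
    · refine (reflTransGen_mergeStep_cons a (ih hq)).tail ?_
      exact Or.inl ⟨a, q.sum, 0, rfl, by simp⟩

lemma reflTransGen_mergeStep_transfer_one {a b : ℕ} (q : Multiset ℕ) (ha : 1 ≤ a) (hb : 1 ≤ b) :
    ReflTransGen MergeStep (a ::ₘ (b + 1) ::ₘ q) ((a + 1) ::ₘ b ::ₘ q) := by
  rcases ha.eq_or_lt with rfl | ha2
  · refine .single <| Or.inr <| Or.inr ⟨1, b + 1, q, rfl, by omega, ?_⟩
    simp [filter_singleton, Nat.ne_of_gt hb, add_comm q, singleton_add, cons_swap]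
  · obtain ⟨c, rfl⟩ := Nat.exists_eq_add_of_le' ha2
    have hsm : MergeStep ((c + 2) ::ₘ (b + 1) ::ₘ q) (2 ::ₘ (c + 1) ::ₘ b ::ₘ q) := by
      refine Or.inr <| Or.inr ⟨c + 2, b + 1, q, rfl, by omega, ?_⟩
      simp [filter_singleton, Nat.ne_of_gt hb, add_comm q, singleton_add, cons_swap]
    have hem : MergeStep (2 ::ₘ (c + 1) ::ₘ b ::ₘ q) ((c + 2 + 1) ::ₘ b ::ₘ q) :=
      Or.inl ⟨2, c + 1, b ::ₘ q, rfl, by rw [add_comm 2, add_assoc]⟩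
    exact .head hsm (.single hem)

lemma reflTransGen_mergeStep_transfer {a b : ℕ} (q : Multiset ℕ) (ha : 1 ≤ a)
    (hb : 1 ≤ b) (t : ℕ) :
    ReflTransGen MergeStep (a ::ₘ (b + t) ::ₘ q) ((a + t) ::ₘ b ::ₘ q) := by
  induction t generalizing a with
  | zero => exact .refl
  | succ t ih =>
    refine (reflTransGen_mergeStep_transfer_one q ha (by omega : 1 ≤ b + t)).trans ?_
    rw [← Nat.add_assoc, Nat.add_right_comm]
    exact ih (by omega)

lemma reflTransGen_mergeStep_split {a b : ℕ} (r : Multiset ℕ) (ha : 1 ≤ a) (hb : 1 ≤ b)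
    (hab : 3 ≤ a + b) : ReflTransGen MergeStep ((a + b) ::ₘ r) (a ::ₘ b ::ₘ r) := by
  wlog ha2 : 2 ≤ a generalizing a b
  · rw [add_comm, cons_swap]
    exact this hb ha (by omega) (by omega)
  have hsm : MergeStep ((a + b) ::ₘ r) (2 ::ₘ (b + (a - 2)) ::ₘ r) :=
    Or.inr <| Or.inl ⟨a + b, r, rfl, hab, by rw [show a + b - 2 = b + (a - 2) by omega]⟩
  have htransfer := reflTransGen_mergeStep_transfer r one_le_two hb (a - 2)
  rw [show 2 + (a - 2) = a by omega] at htransfer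
  exact .head hsm htransfer

lemma reflTransGen_mergeStep_singleton_add_sum {k : ℕ} {r : Multiset ℕ} (hk : 2 ≤ k)
    (hr : ∀ m ∈ r, 0 < m) : ReflTransGen MergeStep {k + r.sum} (k ::ₘ r) := by
  induction r using Multiset.induction_on with
  | empty => simpa using ReflTransGen.refl
  | cons j r ih =>
    simp only [mem_cons, forall_eq_or_imp] at hr
    have hsplit := reflTransGen_mergeStep_split 0 hr.1 (by omega : 1 ≤ k + r.sum) (by omega)
    rw [sum_cons, Nat.add_left_comm, cons_swap k]
    exact hsplit.trans (reflTransGen_mergeStep_cons j (ih hr.2))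

theorem stmt11_general (n : ℕ) :
    ∀ p p' : Multiset ℕ, PVertex n p → PVertex n p' →
      Relation.ReflTransGen (StepOn n) p p' := by
  intro p p' hp hp'
  obtain ⟨⟨hpos', hsum'⟩, k, hk, hk2⟩ := pVertex_iff.1 hp'
  obtain ⟨r, rfl⟩ := exists_cons_of_mem hk
  refine reflTransGen_stepOn_of_mergeStep
    ((reflTransGen_mergeStep_singleton_sum hp.ne_zero).trans ?_) hp
  rw [hp.1.2, ← hsum', sum_cons]
  exact reflTransGen_mergeStep_singleton_add_sum hk2 fun m hm => hpos' m (mem_cons_of_mem hm)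

/-- For every `n ≥ 4`, the directed graph on the partitions of `n` other than the
all-ones partition, with EM and minimal SM edges, is strongly connected. -/
theorem stmt11 (n : ℕ) (hn : 4 ≤ n) :
    ∀ p p' : Multiset ℕ, PVertex n p → PVertex n p' →
      Relation.ReflTransGen (StepOn n) p p' :=
  stmt11_general n
end

section
/- For every n ≥ 3, in the directed graph on P'(n) with EM and SM edges as defined, the partition {3, 1, 1, ..., 1} (one part equal to 3 and n-3 parts equal to 1) has exactly one incoming edge, namely the EM edge from {2, 1, ..., 1}; consequently, removing that single edge disconnects the graph from being strongly connected, so the graph is not strongly 2-edge-connected. -/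
open Multiset

lemma SMStep.two_mem {p p' : Multiset ℕ} (h : SMStep p p') : 2 ∈ p' := by
  rcases h with ⟨m, q, -, -, rfl⟩ | ⟨i, j, q, -, -, rfl⟩
  · exact mem_cons_self _ _
  · exact mem_add.mpr (Or.inl (mem_cons_self _ _))

lemma two_not_mem_cons_three_replicate_one (k : ℕ) : 2 ∉ 3 ::ₘ replicate k 1 := by
  simp [mem_replicate]

/-- The merged part `i + j ≥ 2` cannot be one of the `1`s, so it is the head `m`. -/
lemma EMStep.eq_cons_cons_replicate_one {p : Multiset ℕ} {m k : ℕ} (hpos : ∀ x ∈ p, 0 < x)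
    (h : EMStep p (m ::ₘ replicate k 1)) :
    ∃ i j, 0 < i ∧ 0 < j ∧ i + j = m ∧ p = i ::ₘ j ::ₘ replicate k 1 := by
  obtain ⟨i, j, q, rfl, hq⟩ := h
  have hi : 0 < i := hpos i (mem_cons_self _ _)
  have hj : 0 < j := hpos j (mem_cons_of_mem (mem_cons_self _ _))
  rcases cons_eq_cons.mp hq.symm with ⟨hm, rfl⟩ | ⟨-, r, -, hk⟩
  · exact ⟨i, j, hi, hj, hm, rfl⟩
  · have := eq_of_mem_replicate (hk ▸ mem_cons_self (i + j) r)
    omega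

lemma mergeStep_cons_three_replicate_one_iff {p : Multiset ℕ} {k : ℕ} (hpos : ∀ x ∈ p, 0 < x) :
    MergeStep p (3 ::ₘ replicate k 1) ↔ p = 2 ::ₘ 1 ::ₘ replicate k 1 := by
  constructor
  · rintro (hem | hsm)
    · obtain ⟨i, j, hi, hj, hij, rfl⟩ := hem.eq_cons_cons_replicate_one hpos
      obtain ⟨rfl, rfl⟩ | ⟨rfl, rfl⟩ : (i = 1 ∧ j = 2) ∨ (i = 2 ∧ j = 1) := by omega
      · exact cons_swap _ _ _
      · rfl
    · exact absurd hsm.two_mem (two_not_mem_cons_three_replicate_one k)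
  · rintro rfl
    exact Or.inl ⟨2, 1, _, rfl, rfl⟩

lemma pVertex_cons_replicate_one {n m : ℕ} (hm : 2 ≤ m) (hmn : m ≤ n) :
    PVertex n (m ::ₘ replicate (n - m) 1) := by
  refine ⟨⟨?_, ?_⟩, fun h => ?_⟩
  · intro x hx
    rcases mem_cons.mp hx with rfl | hx
    · omega
    · rw [eq_of_mem_replicate hx]; exact Nat.one_pos
  · rw [sum_cons, sum_replicate, smul_eq_mul]; omega
  · have := eq_of_mem_replicate (h ▸ mem_cons_self m _)
    omega

lemma Relation.not_reflTransGen_of_deleted_sole_pred {α : Type*} {r : α → α → Prop} {a b c : α}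
    (hpred : ∀ x, r x b → x = a) (hcb : c ≠ b) :
    ¬ Relation.ReflTransGen (fun x y => r x y ∧ ¬(x = a ∧ y = b)) c b := by
  intro h
  rcases h.cases_tail with rfl | ⟨x, -, hxb, hdel⟩
  · exact hcb rfl
  · exact hdel ⟨hpred x hxb, rfl⟩

/-- For every `n ≥ 3`, the partition `{3,1,…,1}` has exactly one incoming edge in the
EM–SM graph on `P'(n)`, namely the EM edge from `{2,1,…,1}` (and no incoming SM edge);
consequently, after removing that single edge the graph is no longer strongly
connected, so the graph is not strongly 2-edge-connected. -/
theorem stmt12 (n : ℕ) (hn : 3 ≤ n) :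
    (∀ p : Multiset ℕ, PVertex n p →
      (MergeStep p (3 ::ₘ Multiset.replicate (n - 3) 1) ↔
        p = 2 ::ₘ Multiset.replicate (n - 2) 1)) ∧
    EMStep (2 ::ₘ Multiset.replicate (n - 2) 1) (3 ::ₘ Multiset.replicate (n - 3) 1) ∧
    (¬ ∃ p : Multiset ℕ, PVertex n p ∧
        SMStep p (3 ::ₘ Multiset.replicate (n - 3) 1)) ∧
    ¬ (∀ p p' : Multiset ℕ, PVertex n p → PVertex n p' →
        Relation.ReflTransGen
          (fun q q' => StepOn n q q' ∧
            ¬(q = 2 ::ₘ Multiset.replicate (n - 2) 1 ∧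
              q' = 3 ::ₘ Multiset.replicate (n - 3) 1)) p p') := by
  have hA : 2 ::ₘ replicate (n - 2) 1 = 2 ::ₘ 1 ::ₘ replicate (n - 3) 1 := by
    rw [show n - 2 = n - 3 + 1 by omega, replicate_succ]
  have hin : ∀ p : Multiset ℕ, PVertex n p →
      (MergeStep p (3 ::ₘ replicate (n - 3) 1) ↔ p = 2 ::ₘ replicate (n - 2) 1) :=
    fun p hp => hA ▸ mergeStep_cons_three_replicate_one_iff hp.1.1
  have hAT : 2 ::ₘ replicate (n - 2) 1 ≠ 3 ::ₘ replicate (n - 3) 1 := fun h =>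
    two_not_mem_cons_three_replicate_one (n - 3) (h ▸ mem_cons_self _ _)
  refine ⟨hin, hA ▸ ⟨2, 1, _, rfl, rfl⟩, fun ⟨_, _, hsm⟩ => ?_, fun H => ?_⟩
  · exact two_not_mem_cons_three_replicate_one (n - 3) hsm.two_mem
  · have hAv := pVertex_cons_replicate_one (n := n) (m := 2) le_rfl (by omega)
    have hTv := pVertex_cons_replicate_one (m := 3) (by norm_num) hn
    exact Relation.not_reflTransGen_of_deleted_sole_pred (fun x hx => (hin x hx.2.1).1 hx.1) hAT
      (H _ _ hAv hTv)
end

section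
/- Let K(t) be a family of nonnegative irreducible square matrices with entries K(t)_{ij} = A_{ij} t^{c_{ij}} for constants A_{ij} ≥ 0 and exponents c_{ij} ≥ 0 (with A_{ij} = 0 interpreted as a missing edge). Suppose for small t > 0 the Perron-Frobenius eigenvalue is λ(t) = λ t^ℓ + o(t^ℓ) with λ > 0 and the right eigenvector has entries η_i(t) = η_i t^{u_i} + o(t^{u_i}) with η_i > 0. Then the orders of magnitude satisfy the min-plus eigenvalue equation: for every i, min_j { c_{ij} + u_j : A_{ij} > 0 } = ℓ + u_i. -/
open Filter Topology

private lemma rpow_tendsto_zero' {a : ℝ} (ha : 0 < a) :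
    Tendsto (fun t : ℝ => t ^ a) (𝓝[>] (0:ℝ)) (𝓝 0) := by
  have h := (Real.continuousAt_rpow_const 0 a (Or.inr ha.le)).tendsto
  rw [Real.zero_rpow ha.ne'] at h
  exact h.mono_left nhdsWithin_le_nhds

private lemma exp_eq_zero' {a P : ℝ} (hP : 0 < P)
    (h : Tendsto (fun t : ℝ => t ^ a) (𝓝[>] (0:ℝ)) (𝓝 P)) : a = 0 := by
  by_contra ha
  rcases lt_or_gt_of_ne ha with hneg | hpos
  · have h1 : Tendsto (fun t : ℝ => t ^ (-a)) (𝓝[>] (0:ℝ)) (𝓝 P⁻¹) := by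
      refine Tendsto.congr' ?_ (h.inv₀ hP.ne')
      filter_upwards [self_mem_nhdsWithin] with t ht
      exact (Real.rpow_neg (le_of_lt ht) a).symm
    have h2 := rpow_tendsto_zero' (by linarith : (0:ℝ) < -a)
    have h3 := tendsto_nhds_unique h1 h2
    exact (inv_pos.mpr hP).ne' h3
  · exact hP.ne' (tendsto_nhds_unique h (rpow_tendsto_zero' hpos))

/-- doc from problem -/
theorem stmt17 {V : Type*} [Fintype V] [Nonempty V]
    (A c : V → V → ℝ) (hA : ∀ i j, 0 ≤ A i j) (hc : ∀ i j, 0 ≤ c i j)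
    (hrow : ∀ i, ∃ j, 0 < A i j)
    (hirr : ∀ i j : V, Relation.ReflTransGen (fun a b => 0 < A a b) i j)
    (lam : ℝ → ℝ) (eta : V → ℝ → ℝ)
    (heig : ∀ᶠ t in 𝓝[>] (0 : ℝ), ∀ i,
      ∑ j, (A i j * t ^ c i j) * eta j t = lam t * eta i t)
    (ℓ lam0 : ℝ) (hlam0 : 0 < lam0)
    (hlam : Tendsto (fun t => lam t / t ^ ℓ) (𝓝[>] (0 : ℝ)) (𝓝 lam0))
    (u eta0 : V → ℝ) (heta0 : ∀ i, 0 < eta0 i)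
    (heta : ∀ i, Tendsto (fun t => eta i t / t ^ u i) (𝓝[>] (0 : ℝ)) (𝓝 (eta0 i))) :
    ∀ i, sInf {x : ℝ | ∃ j, 0 < A i j ∧ x = c i j + u j} = ℓ + u i := by
  intro i
  set Sset := {x : ℝ | ∃ j, 0 < A i j ∧ x = c i j + u j} with hSset
  have hfin : Sset.Finite := by
    have hsub : Sset ⊆ Set.range fun j => c i j + u j := by
      rintro x ⟨j, _, rfl⟩; exact ⟨j, rfl⟩
    exact (Set.finite_range _).subset hsub
  have hne : Sset.Nonempty := by
    obtain ⟨j, hj⟩ := hrow i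
    exact ⟨c i j + u j, j, hj, rfl⟩
  set m := sInf Sset with hm
  obtain ⟨j0, hj0A, hj0⟩ : ∃ j, 0 < A i j ∧ m = c i j + u j := hne.csInf_mem hfin
  have hmin : ∀ j, 0 < A i j → m ≤ c i j + u j := fun j hj =>
    csInf_le hfin.bddBelow ⟨j, hj, rfl⟩
  set limJ : V → ℝ := fun j => if 0 < A i j ∧ c i j + u j = m then A i j * eta0 j else 0
    with hlimJ
  have hterm : ∀ j, Tendsto (fun t => A i j * t ^ c i j * eta j t / t ^ m)
      (𝓝[>] (0:ℝ)) (𝓝 (limJ j)) := by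
    intro j
    have heq : ∀ᶠ t in 𝓝[>] (0:ℝ),
        A i j * t ^ (c i j + u j - m) * (eta j t / t ^ u j)
          = A i j * t ^ c i j * eta j t / t ^ m := by
      filter_upwards [self_mem_nhdsWithin] with t ht
      have ht' : (0:ℝ) < t := ht
      have hu : t ^ u j ≠ 0 := (Real.rpow_pos_of_pos ht' _).ne'
      have hmne : t ^ m ≠ 0 := (Real.rpow_pos_of_pos ht' _).ne'
      rw [Real.rpow_sub ht', Real.rpow_add ht']
      field_simp
    rcases eq_or_lt_of_le (hA i j) with hA0 | hApos
    · have hz : limJ j = 0 := by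
        simp only [hlimJ]
        rw [if_neg]
        rintro ⟨h1, -⟩
        rw [← hA0] at h1
        exact lt_irrefl _ h1
      rw [hz]
      have hfun : (fun t : ℝ => A i j * t ^ c i j * eta j t / t ^ m)
          = fun _ => (0:ℝ) := by
        funext t; rw [← hA0]; ring
      rw [hfun]; exact tendsto_const_nhds
    · rcases eq_or_lt_of_le (hmin j hApos) with he0 | hepos
      · have hz : limJ j = A i j * eta0 j := by
          simp only [hlimJ]
          rw [if_pos ⟨hApos, he0.symm⟩]
        rw [hz]
        refine Tendsto.congr' heq ?_
        have he : c i j + u j - m = 0 := by rw [← he0]; ring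
        rw [he]
        have h1 : Tendsto (fun t : ℝ => A i j * t ^ (0:ℝ)) (𝓝[>] (0:ℝ)) (𝓝 (A i j * 1)) := by
          simpa [Real.rpow_zero] using (tendsto_const_nhds : Tendsto (fun _ : ℝ => A i j) (𝓝[>] (0:ℝ)) _)
        simpa using h1.mul (heta j)
      · have hz : limJ j = 0 := by
          simp only [hlimJ]
          rw [if_neg]
          rintro ⟨-, h2⟩
          exact absurd h2 (by linarith)
        rw [hz]
        refine Tendsto.congr' heq ?_
        have hE := rpow_tendsto_zero' (by linarith : 0 < c i j + u j - m)
        have h1 : Tendsto (fun t : ℝ => A i j * t ^ (c i j + u j - m)) (𝓝[>] (0:ℝ))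
            (𝓝 (A i j * 0)) := tendsto_const_nhds.mul hE
        simpa using h1.mul (heta j)
  have hsum : Tendsto (fun t => (∑ j, A i j * t ^ c i j * eta j t) / t ^ m)
      (𝓝[>] (0:ℝ)) (𝓝 (∑ j, limJ j)) := by
    have h := tendsto_finset_sum Finset.univ (fun j _ => hterm j)
    exact h.congr fun t => (Finset.sum_div _ _ _).symm
  have hSpos : 0 < ∑ j, limJ j := by
    refine Finset.sum_pos' (fun j _ => ?_) ⟨j0, Finset.mem_univ _, ?_⟩
    · simp only [hlimJ]
      split
      · exact mul_nonneg (hA i j) (heta0 j).le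
      · exact le_refl 0
    · simp only [hlimJ]
      rw [if_pos ⟨hj0A, hj0.symm⟩]
      exact mul_pos hj0A (heta0 j0)
  have hR : Tendsto (fun t => lam t * eta i t / t ^ m) (𝓝[>] (0:ℝ)) (𝓝 (∑ j, limJ j)) := by
    refine hsum.congr' ?_
    filter_upwards [heig] with t ht
    rw [ht i]
  have hH : Tendsto (fun t => lam t / t ^ ℓ * (eta i t / t ^ u i)) (𝓝[>] (0:ℝ))
      (𝓝 (lam0 * eta0 i)) := hlam.mul (heta i)
  have hHpos : 0 < lam0 * eta0 i := mul_pos hlam0 (heta0 i)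
  have hHne : ∀ᶠ t in 𝓝[>] (0:ℝ), lam t / t ^ ℓ * (eta i t / t ^ u i) ≠ 0 :=
    hH.eventually_ne hHpos.ne'
  have hP : Tendsto (fun t : ℝ => t ^ (ℓ + u i - m)) (𝓝[>] (0:ℝ))
      (𝓝 ((∑ j, limJ j) / (lam0 * eta0 i))) := by
    refine Tendsto.congr' ?_ (hR.div hH hHpos.ne')
    filter_upwards [self_mem_nhdsWithin, hHne] with t ht hne'
    have ht' : (0:ℝ) < t := ht
    have hl : t ^ ℓ ≠ 0 := (Real.rpow_pos_of_pos ht' _).ne'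
    have hu : t ^ u i ≠ 0 := (Real.rpow_pos_of_pos ht' _).ne'
    have hmne : t ^ m ≠ 0 := (Real.rpow_pos_of_pos ht' _).ne'
    have hkey : lam t * eta i t / t ^ m
        = lam t / t ^ ℓ * (eta i t / t ^ u i) * t ^ (ℓ + u i - m) := by
      rw [Real.rpow_sub ht', Real.rpow_add ht']
      field_simp
    simp only [Pi.div_apply]
    rw [hkey, mul_div_cancel_left₀ _ hne']
  have := exp_eq_zero' (div_pos hSpos hHpos) hP
  linarith
end
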